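/- arXiv:1807.03080 — 3 statements merged into one kernel-verified Lean document; each statement's English description precedes it below -/
import Mathlib

section
/- Let A be a unital C*-algebra, n ∈ ℕ, and x₁, …, xₙ ∈ A elements satisfying ∑_{i=1}^n xᵢ*xᵢ = 1 and ∑_{i=1}^n xᵢxᵢ* = 1. Fix an index i. Suppose that for every index j ≠ i such that x_j is not normal, one has xᵢx_j = x_jxᵢ and xᵢ*x_j = x_jxᵢ*. Then xᵢ is normal. -/
/-!
Put `d = ⁅a, a*⁆` for `a = xᵢ`. The sphere relations give `∑ⱼ ⁅xⱼ, xⱼ*⁆ = 0`, and every summand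
with `j ≠ i` commutes with `a` (it vanishes when `xⱼ` is normal), so `a` commutes with `d`.
By the Kleinecke–Shirokov argument, if `δ = ⁅a, ·⁆` kills `d = δ b` then
`δⁿ (bⁿ) = n! dⁿ`, whence `n! ‖dⁿ‖ ≤ (2 ‖a‖ ‖b‖)ⁿ`. As `d` is self-adjoint,
`‖d^(2^k)‖ = ‖d‖^(2^k)`, and the factorial growth forces `d = 0`.
-/

open Finset Filter Topology

section Ring

variable {A : Type*} [Ring A]

attribute [local instance] LieRing.ofAssociativeRing

theorem Commute.lie_right {a b c : A} (hb : Commute a b) (hc : Commute a c) :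
    Commute a ⁅b, c⁆ := by
  rw [Ring.lie_def]
  exact (hb.mul_right hc).sub_right (hc.mul_right hb)

theorem lie_mul (a x y : A) : ⁅a, x * y⁆ = ⁅a, x⁆ * y + x * ⁅a, y⁆ := by
  simp only [Ring.lie_def]
  noncomm_ring

theorem iterate_lie_mul_of_commute_lie {a b : A} (h : Commute a ⁅a, b⁆) (m : ℕ) (y : A) :
    (⁅a, ·⁆)^[m + 1] (b * y) =
      b * (⁅a, ·⁆)^[m + 1] y + (m + 1) • (⁅a, b⁆ * (⁅a, ·⁆)^[m] y) := by
  induction m with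
  | zero =>
    simp only [zero_add, Function.iterate_one, Function.iterate_zero, id_eq, one_smul, lie_mul]
    abel
  | succ m ih =>
    rw [Function.iterate_succ_apply', ih, lie_add, lie_nsmul, lie_mul, lie_mul,
      commute_iff_lie_eq.mp h, zero_mul, zero_add, ← Function.iterate_succ_apply' (⁅a, ·⁆),
      ← Function.iterate_succ_apply' (⁅a, ·⁆) m, succ_nsmul _ (m + 1)]
    abel

theorem iterate_lie_pow_of_commute_lie {a b : A} (h : Commute a ⁅a, b⁆) (n : ℕ) :
    (⁅a, ·⁆)^[n] (b ^ n) = n.factorial • ⁅a, b⁆ ^ n := by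
  induction n with
  | zero => simp
  | succ n ih =>
    have hvanish : (⁅a, ·⁆)^[n + 1] (b ^ n) = 0 := by
      rw [Function.iterate_succ_apply', ih, lie_nsmul, commute_iff_lie_eq.mp (h.pow_right n),
        smul_zero]
    rw [pow_succ', iterate_lie_mul_of_commute_lie h, hvanish, mul_zero, zero_add, ih,
      mul_smul_comm, smul_smul, ← pow_succ', Nat.factorial_succ]

end Ring

section NormedRing

variable {A : Type*} [NormedRing A]

theorem norm_lie_le (a x : A) : ‖⁅a, x⁆‖ ≤ 2 * ‖a‖ * ‖x‖ :=
  calc ‖a * x - x * a‖ ≤ ‖a * x‖ + ‖x * a‖ := norm_sub_le _ _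
    _ ≤ ‖a‖ * ‖x‖ + ‖x‖ * ‖a‖ := add_le_add (norm_mul_le _ _) (norm_mul_le _ _)
    _ = 2 * ‖a‖ * ‖x‖ := by ring

theorem norm_iterate_lie_le (a x : A) (m : ℕ) :
    ‖(⁅a, ·⁆)^[m] x‖ ≤ (2 * ‖a‖) ^ m * ‖x‖ := by
  induction m with
  | zero => simp
  | succ m ih =>
    rw [Function.iterate_succ_apply', pow_succ', mul_assoc]
    exact (norm_lie_le _ _).trans (mul_le_mul_of_nonneg_left ih (by positivity))

theorem factorial_mul_norm_lie_pow_le [NormedSpace ℝ A] {a b : A} (h : Commute a ⁅a, b⁆)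
    {n : ℕ} (hn : 0 < n) : n.factorial * ‖⁅a, b⁆ ^ n‖ ≤ (2 * ‖a‖ * ‖b‖) ^ n :=
  calc n.factorial * ‖⁅a, b⁆ ^ n‖ = ‖(⁅a, ·⁆)^[n] (b ^ n)‖ := by
        rw [iterate_lie_pow_of_commute_lie h, RCLike.norm_nsmul ℝ, nsmul_eq_mul]
    _ ≤ (2 * ‖a‖) ^ n * ‖b ^ n‖ := norm_iterate_lie_le _ _ _
    _ ≤ (2 * ‖a‖) ^ n * ‖b‖ ^ n := by gcongr; exact norm_pow_le' b hn
    _ = (2 * ‖a‖ * ‖b‖) ^ n := (mul_pow _ _ _).symm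

end NormedRing

theorem eq_zero_of_factorial_mul_pow_le {r C : ℝ} (hr : 0 ≤ r) {m : ℕ → ℕ}
    (hm : Tendsto m atTop atTop) (h : ∀ k, (m k).factorial * r ^ m k ≤ C ^ m k) : r = 0 := by
  by_contra hne
  have hr' : 0 < r := hr.lt_of_ne' hne
  have hlim : Tendsto (fun k ↦ (C / r) ^ m k / (m k).factorial) atTop (𝓝 0) :=
    (FloorSemiring.tendsto_pow_div_factorial_atTop (C / r)).comp hm
  have hge : ∀ k, 1 ≤ (C / r) ^ m k / (m k).factorial := fun k ↦ by
    rw [div_pow, le_div_iff₀ (by positivity), one_mul, le_div_iff₀ (by positivity)]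
    linarith [h k]
  exact absurd (ge_of_tendsto' hlim hge) (by norm_num)

theorem commute_of_commute_lie_of_isSelfAdjoint {A : Type*} [NormedRing A] [StarRing A]
    [CStarRing A] [NormedSpace ℝ A] {a b : A} (h : Commute a ⁅a, b⁆)
    (hsa : IsSelfAdjoint ⁅a, b⁆) : Commute a b := by
  rw [commute_iff_lie_eq, ← norm_eq_zero]
  refine eq_zero_of_factorial_mul_pow_le (C := 2 * ‖a‖ * ‖b‖) (norm_nonneg _)
    (tendsto_pow_atTop_atTop_of_one_lt one_lt_two) fun k ↦ ?_
  rw [← hsa.norm_pow_two_pow]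
  exact factorial_mul_norm_lie_pow_le h (by positivity)

theorem commute_of_sum_eq_zero {A ι : Type*} [Ring A] [DecidableEq ι] {s : Finset ι}
    {f : ι → A} {a : A} {i : ι} (hi : i ∈ s) (hsum : ∑ j ∈ s, f j = 0)
    (h : ∀ j ∈ s.erase i, Commute a (f j)) : Commute a (f i) := by
  rw [eq_neg_of_add_eq_zero_left ((add_sum_erase s f hi).trans hsum)]
  exact (Commute.sum_right _ _ _ h).neg_right

/-- Lemma 2.1 (2): if `x₁, …, xₙ` satisfy the noncommutative complex sphere
relations `∑ xᵢ* xᵢ = ∑ xᵢ xᵢ* = 1`, and `xᵢ` commutes and star-commutes with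
every non-normal `xⱼ` (`j ≠ i`), then `xᵢ` is normal. -/
theorem normal_of_commutes_with_nonnormal {A : Type*} [CStarAlgebra A]
    {n : ℕ} (x : Fin n → A)
    (hsum₁ : ∑ i, star (x i) * x i = 1)
    (hsum₂ : ∑ i, x i * star (x i) = 1)
    (i : Fin n)
    (hcomm : ∀ j : Fin n, j ≠ i → ¬(star (x j) * x j = x j * star (x j)) →
      x i * x j = x j * x i ∧ star (x i) * x j = x j * star (x i)) :
    star (x i) * x i = x i * star (x i) := by
  have hsum : ∑ j, ⁅x j, star (x j)⁆ = 0 := by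
    simp only [Ring.lie_def, sum_sub_distrib, hsum₁, hsum₂, sub_self]
  have hothers : ∀ j ∈ univ.erase i, Commute (x i) ⁅x j, star (x j)⁆ := fun j hj ↦ by
    by_cases hnormal : star (x j) * x j = x j * star (x j)
    · rw [Ring.lie_def, hnormal, sub_self]
      exact Commute.zero_right _
    · obtain ⟨hx, hstar⟩ := hcomm j (ne_of_mem_erase hj) hnormal
      exact Commute.lie_right hx (commute_star_comm.mp hstar)
  have hsa : IsSelfAdjoint ⁅x i, star (x i)⁆ := by
    simp only [IsSelfAdjoint, Ring.lie_def, star_sub, star_mul, star_star]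
  have hself : Commute (x i) ⁅x i, star (x i)⁆ :=
    commute_of_sum_eq_zero (f := fun j ↦ ⁅x j, star (x j)⁆) (mem_univ i) hsum hothers
  exact (commute_of_commute_lie_of_isSelfAdjoint hself hsa).eq.symm
end

section
/- Let a = E₃₁ + (√2/2)E₄₄ and b = E₂₁ + E₃₂ + (√2/2)E₄₄ in M₄(ℂ). Then the pair (a, b*) satisfies: a*a + bb* = 1, aa* + b*b = 1, a*b* = b*a*, and ab = (1/2)E₄₄ ≠ 0. In particular, the assignment x₁ ↦ a, x₂ ↦ b* satisfies the noncommutative complex sphere relations ∑ xᵢ*xᵢ = ∑ xᵢxᵢ* = 1 and x₁*x₂ = x₂x₁*, while x₁x₂* ≠ 0. -/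
/-! The shift parts `E₃₁` and `E₂₁ + E₃₂` of `a` and `b` account for the projections onto the
first three coordinates in both sphere relations, and annihilate each other in `ab` and in
`a*b*`, `b*a*`. The remaining `E₄₄`-corner only needs a scalar `s` with `|s|² = 1/2`,
so `ab = s² E₄₄` survives. -/

open Matrix

/-- The matrix `a = E₃₁ + (√2/2) E₄₄` from Remark 2.2. -/
noncomputable def remA : Matrix (Fin 4) (Fin 4) ℂ :=
  Matrix.single 2 0 1 + Matrix.single 3 3 ((Real.sqrt 2 / 2 : ℝ) : ℂ)

/-- The matrix `b = E₂₁ + E₃₂ + (√2/2) E₄₄` from Remark 2.2. -/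
noncomputable def remB : Matrix (Fin 4) (Fin 4) ℂ :=
  Matrix.single 1 0 1 + Matrix.single 2 1 1 +
    Matrix.single 3 3 ((Real.sqrt 2 / 2 : ℝ) : ℂ)

lemma Matrix.single_ne_zero {m n α : Type*} [DecidableEq m] [DecidableEq n] [Zero α]
    (i : m) (j : n) {c : α} (hc : c ≠ 0) : single i j c ≠ 0 :=
  fun h => hc (by simpa using congr_fun₂ h i j)

lemma Matrix.one_eq_sum_single {n α : Type*} [Fintype n] [DecidableEq n]
    [AddCommMonoidWithOne α] : (1 : Matrix n n α) = ∑ i, single i i 1 := by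
  rw [sum_single_eq_diagonal]
  rfl

lemma one_fin_four_eq_sum_single_halves :
    (1 : Matrix (Fin 4) (Fin 4) ℂ) =
      single 0 0 1 + single 1 1 1 + single 2 2 1 + single 3 3 (1 / 2) + single 3 3 (1 / 2) := by
  rw [add_assoc _ (single 3 3 _), ← single_add, add_halves, one_eq_sum_single, Fin.sum_univ_four]

def remAWith (s : ℂ) : Matrix (Fin 4) (Fin 4) ℂ := single 2 0 1 + single 3 3 s

def remBWith (s : ℂ) : Matrix (Fin 4) (Fin 4) ℂ := single 1 0 1 + single 2 1 1 + single 3 3 s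

section remWith

variable (s : ℂ)

lemma star_remAWith : star (remAWith s) = single 0 2 1 + single 3 3 (star s) := by
  simp only [remAWith, star_add, star_eq_conjTranspose, conjTranspose_single, star_one]

lemma star_remBWith :
    star (remBWith s) = single 0 1 1 + single 1 2 1 + single 3 3 (star s) := by
  simp only [remBWith, star_add, star_eq_conjTranspose, conjTranspose_single, star_one]

lemma star_remAWith_mul_self_add_remBWith_mul_star (hs : star s * s = 1 / 2) :
    star (remAWith s) * remAWith s + remBWith s * star (remBWith s) = 1 := by
  rw [star_remAWith, star_remBWith, remAWith, remBWith]
  simp only [add_mul, mul_add, single_mul_single_same, ne_eq, Fin.reduceEq, not_false_eq_true,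
    single_mul_single_of_ne, mul_one, add_zero, zero_add]
  rw [mul_comm s, hs, one_fin_four_eq_sum_single_halves]
  abel

lemma remAWith_mul_star_add_star_remBWith_mul_self (hs : star s * s = 1 / 2) :
    remAWith s * star (remAWith s) + star (remBWith s) * remBWith s = 1 := by
  rw [star_remAWith, star_remBWith, remAWith, remBWith]
  simp only [add_mul, mul_add, single_mul_single_same, ne_eq, Fin.reduceEq, not_false_eq_true,
    single_mul_single_of_ne, mul_one, add_zero, zero_add]
  rw [mul_comm s, hs, one_fin_four_eq_sum_single_halves]
  abel

lemma star_remAWith_mul_star_remBWith_comm :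
    star (remAWith s) * star (remBWith s) = star (remBWith s) * star (remAWith s) := by
  rw [star_remAWith, star_remBWith]
  simp only [add_mul, mul_add, single_mul_single_same, ne_eq, Fin.reduceEq, not_false_eq_true,
    single_mul_single_of_ne, add_zero, zero_add]

lemma remAWith_mul_remBWith : remAWith s * remBWith s = single 3 3 (s * s) := by
  rw [remAWith, remBWith]
  simp only [add_mul, mul_add, single_mul_single_same, ne_eq, Fin.reduceEq, not_false_eq_true,
    single_mul_single_of_ne, add_zero, zero_add]

end remWith

lemma ofReal_sqrt_two_div_two_mul_self :
    ((Real.sqrt 2 / 2 : ℝ) : ℂ) * ((Real.sqrt 2 / 2 : ℝ) : ℂ) = 1 / 2 := by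
  rw [← Complex.ofReal_mul, div_mul_div_comm, Real.mul_self_sqrt zero_le_two]
  norm_num

/-- The pair `(x₁, x₂) = (a, b*)` satisfies the noncommutative complex sphere
relations `x₁*x₁ + x₂*x₂ = 1`, `x₁x₁* + x₂x₂* = 1`, the star-commutation
relation `x₁*x₂ = x₂x₁*` (i.e. `a*b* = b*a*`), while `x₁x₂* = ab = (1/2)E₄₄`
is nonzero. -/
theorem sphere_relations_a_bstar :
    star remA * remA + remB * star remB = 1 ∧
    remA * star remA + star remB * remB = 1 ∧
    star remA * star remB = star remB * star remA ∧
    remA * remB = Matrix.single 3 3 ((1 : ℂ) / 2) ∧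
    remA * remB ≠ 0 := by
  set s : ℂ := ((Real.sqrt 2 / 2 : ℝ) : ℂ)
  have hA : remA = remAWith s := rfl
  have hB : remB = remBWith s := rfl
  have hs : star s * s = 1 / 2 := by
    rw [Complex.star_def, Complex.conj_ofReal, ofReal_sqrt_two_div_two_mul_self]
  have hab : remA * remB = single 3 3 (1 / 2) := by
    rw [hA, hB, remAWith_mul_remBWith, ofReal_sqrt_two_div_two_mul_self]
  rw [hA, hB] at hab ⊢
  exact ⟨star_remAWith_mul_self_add_remBWith_mul_star s hs,
    remAWith_mul_star_add_star_remBWith_mul_self s hs,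
    star_remAWith_mul_star_remBWith_comm s, hab,
    hab ▸ single_ne_zero 3 3 (by norm_num)⟩
end

section
/- There exist a unital C*-algebra A and elements v_{ij} ∈ A (i, j ∈ {1, 2}) such that each v_{ij} is self-adjoint, the 2×2 matrix v = (v_{ij}) over A is orthogonal in the sense that ∑_k v_{ik}v_{jk} = δ_{ij}·1 and ∑_k v_{ki}v_{kj} = δ_{ij}·1 for all i, j, and the two elements v₁₁v₂₁ and v₂₁v₁₁ are linearly independent over ℂ. -/
/-- A bundled unital C*-algebra, used to state an existential quantification
over unital C*-algebras. -/
structure BundledCStarAlgebra where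
  carrier : Type
  [inst : CStarAlgebra carrier]

attribute [instance] BundledCStarAlgebra.inst

/-!
Take `v = diag(p, q) · [[c, s], [-s, c]]` with `c² + s² = 1` and symmetries `p`, `q` (self-adjoint
with `p² = q² = 1`); such a `v` is orthogonal with self-adjoint entries, and
`v₀₀v₁₀ = -cs • pq`, `v₁₀v₀₀ = -cs • qp`. So it suffices to find two symmetries with `pq` and `qp`
linearly independent. Two reflections of `ℂ²` whose mirror axes meet at an angle `θ` do, as soon as
`2θ` is not a multiple of `π/2`: their products are the rotations by `2θ` and by `-2θ`.
-/

section OrthogonalOfSymmetries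

variable {R A : Type*} [CommRing R] [Ring A] [Algebra R A]

def orthogonalOfSymmetries (c s : R) (p q : A) : Fin 2 → Fin 2 → A :=
  ![![c • p, s • p], ![-(s • q), c • q]]

variable {c s : R} {p q : A}

theorem orthogonalOfSymmetries_mul_transpose (hcs : c ^ 2 + s ^ 2 = 1) (hp : p * p = 1)
    (hq : q * q = 1) (i j : Fin 2) :
    ∑ k, orthogonalOfSymmetries c s p q i k * orthogonalOfSymmetries c s p q j k =
      if i = j then 1 else 0 := by
  have hcs' : c * c + s * s = 1 := by rw [← sq, ← sq, hcs]
  fin_cases i <;> fin_cases j <;> simp [orthogonalOfSymmetries, Fin.sum_univ_two, hp, hq, smul_smul,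
    mul_comm c s, ← add_smul, hcs', add_comm (s * s)]

theorem orthogonalOfSymmetries_transpose_mul (hcs : c ^ 2 + s ^ 2 = 1) (hp : p * p = 1)
    (hq : q * q = 1) (i j : Fin 2) :
    ∑ k, orthogonalOfSymmetries c s p q k i * orthogonalOfSymmetries c s p q k j =
      if i = j then 1 else 0 := by
  have hcs' : c * c + s * s = 1 := by rw [← sq, ← sq, hcs]
  fin_cases i <;> fin_cases j <;> simp [orthogonalOfSymmetries, Fin.sum_univ_two, hp, hq, smul_smul,
    mul_comm c s, ← add_smul, hcs', add_comm (s * s)]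

theorem isSelfAdjoint_orthogonalOfSymmetries [StarRing R] [StarRing A] [StarModule R A]
    (hc : IsSelfAdjoint c) (hs : IsSelfAdjoint s) (hp : IsSelfAdjoint p) (hq : IsSelfAdjoint q)
    (i j : Fin 2) : IsSelfAdjoint (orthogonalOfSymmetries c s p q i j) := by
  fin_cases i <;> fin_cases j
  exacts [hc.smul hp, hs.smul hp, (hs.smul hq).neg, hc.smul hq]

end OrthogonalOfSymmetries

theorem linearIndependent_orthogonalOfSymmetries {K A : Type*} [Field K] [Ring A] [Algebra K A]
    {c s : K} {p q : A} (hc : c ≠ 0) (hs : s ≠ 0) (hpq : LinearIndependent K ![p * q, q * p]) :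
    LinearIndependent K
      ![orthogonalOfSymmetries c s p q 0 0 * orthogonalOfSymmetries c s p q 1 0,
        orthogonalOfSymmetries c s p q 1 0 * orthogonalOfSymmetries c s p q 0 0] := by
  have h : LinearIndependent K ![(c * s) • (p * q), (c * s) • (q * p)] :=
    (LinearIndependent.pair_smul_iff (mul_ne_zero hc hs)).2 hpq
  simpa [orthogonalOfSymmetries, smul_smul, mul_comm s c] using h

section ReflectionMatrix

variable {R : Type*} [CommRing R]

def reflectionMatrix (a b : R) : Matrix (Fin 2) (Fin 2) R :=
  !![a, b; b, -a]

theorem reflectionMatrix_mul_self {a b : R} (h : a ^ 2 + b ^ 2 = 1) :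
    reflectionMatrix a b * reflectionMatrix a b = 1 := by
  rw [reflectionMatrix, Matrix.mul_fin_two, Matrix.one_fin_two]
  ext i j
  fin_cases i <;> fin_cases j <;> simp [← sq, h, add_comm (b ^ 2), mul_comm a b]

theorem isSelfAdjoint_reflectionMatrix [StarRing R] {a b : R} (ha : IsSelfAdjoint a)
    (hb : IsSelfAdjoint b) : IsSelfAdjoint (reflectionMatrix a b) := by
  ext i j
  fin_cases i <;> fin_cases j <;> simp [reflectionMatrix, ha.star_eq, hb.star_eq]

theorem linearIndependent_reflectionMatrix_mul {K : Type*} [Field K] [NeZero (2 : K)] {a b : K}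
    (ha : a ≠ 0) (hb : b ≠ 0) :
    LinearIndependent K ![reflectionMatrix 1 0 * reflectionMatrix a b,
      reflectionMatrix a b * reflectionMatrix 1 0] := by
  rw [LinearIndependent.pair_iff]
  intro x y hxy
  have h00 := congr_fun₂ hxy 0 0
  have h01 := congr_fun₂ hxy 0 1
  simp [reflectionMatrix] at h00 h01
  have hsum : x + y = 0 :=
    (mul_eq_zero.1 (by linear_combination h00 : (x + y) * a = 0)).resolve_right ha
  have hdiff : x - y = 0 :=
    (mul_eq_zero.1 (by linear_combination h01 : (x - y) * b = 0)).resolve_right hb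
  constructor
  · exact (mul_eq_zero.1 (by linear_combination hsum + hdiff : (2 : K) * x = 0)).resolve_left
      two_ne_zero
  · exact (mul_eq_zero.1 (by linear_combination hsum - hdiff : (2 : K) * y = 0)).resolve_left
      two_ne_zero

end ReflectionMatrix

open Finset in
/-- There exist a unital C*-algebra `A` and a `2 × 2` orthogonal matrix
`v = (vᵢⱼ)` of self-adjoint elements of `A` such that `v₁₁v₂₁` and `v₂₁v₁₁`
are linearly independent over `ℂ` (realized by the free quantum orthogonal
group `O₂⁺`). -/
theorem exists_cstar_orthogonal_matrix_linearIndependent :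
    ∃ (W : BundledCStarAlgebra) (v : Fin 2 → Fin 2 → W.carrier),
      (∀ i j, star (v i j) = v i j) ∧
      (∀ i j, ∑ k, v i k * v j k = if i = j then 1 else 0) ∧
      (∀ i j, ∑ k, v k i * v k j = if i = j then 1 else 0) ∧
      LinearIndependent ℂ ![v 0 0 * v 1 0, v 1 0 * v 0 0] := by
  have hcs : (3 / 5 : ℂ) ^ 2 + (4 / 5) ^ 2 = 1 := by norm_num
  have hc : IsSelfAdjoint (3 / 5 : ℂ) := by simp [IsSelfAdjoint]
  have hs : IsSelfAdjoint (4 / 5 : ℂ) := by simp [IsSelfAdjoint]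
  let p : Matrix (Fin 2) (Fin 2) ℂ := reflectionMatrix 1 0
  let q : Matrix (Fin 2) (Fin 2) ℂ := reflectionMatrix (3 / 5) (4 / 5)
  have hp : p * p = 1 := reflectionMatrix_mul_self (by norm_num)
  have hq : q * q = 1 := reflectionMatrix_mul_self hcs
  refine ⟨{ carrier := Matrix (Fin 2) (Fin 2) ℂ, inst := Matrix.instCStarAlgebra },
    orthogonalOfSymmetries (3 / 5 : ℂ) (4 / 5) p q,
    isSelfAdjoint_orthogonalOfSymmetries hc hs
      (isSelfAdjoint_reflectionMatrix (.one ℂ) (.zero ℂ))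
      (isSelfAdjoint_reflectionMatrix hc hs),
    orthogonalOfSymmetries_mul_transpose hcs hp hq,
    orthogonalOfSymmetries_transpose_mul hcs hp hq,
    linearIndependent_orthogonalOfSymmetries (by norm_num) (by norm_num)
      (linearIndependent_reflectionMatrix_mul (by norm_num) (by norm_num))⟩
end
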